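/- arXiv:2108.12561 — 3 statements merged into one kernel-verified Lean document; each statement's English description precedes it below -/
import Mathlib

section
/- Let Σ ⊆ ℝⁿ be a nonempty closed set, U an open subset of ℝⁿ∖Σ, 0 ∈ (a,b) ⊆ ℝ, and G : U×(a,b) → ℝⁿ a continuous mapping satisfying ‖G(x,t)‖ ≤ C·d(x,Σ) for some constant C > 0 and all (x,t) ∈ U×(a,b). Let φ : (α,β) → U be a differentiable curve with φ'(t) = G(φ(t),t) for all t, where 0 ∈ (α,β) ⊆ (a,b) and φ(0) = x₀ ∈ U. Then for every t ∈ (α,β): d(x₀,Σ)·e^{−C|t|} ≤ d(φ(t),Σ) ≤ d(x₀,Σ)·e^{C|t|}. -/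
open Set Metric Filter
open scoped Topology

private lemma infDist_grow_key {E : Type*} [NormedAddCommGroup E] [NormedSpace ℝ E]
    (Sig : Set E) (C : ℝ) (s t : ℝ) (hst : s ≤ t)
    (ψ ψ' : ℝ → E)
    (hd : ∀ u ∈ Icc s t, HasDerivAt ψ (ψ' u) u)
    (hb : ∀ u ∈ Icc s t, ‖ψ' u‖ ≤ C * infDist (ψ u) Sig) :
    infDist (ψ t) Sig ≤ infDist (ψ s) Sig * Real.exp (C * (t - s)) := by
  set f : ℝ → ℝ := fun u => infDist (ψ u) Sig with hf
  have hcont : ContinuousOn f (Icc s t) := by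
    exact (continuous_infDist_pt Sig).comp_continuousOn
      (fun u hu => ((hd u hu).continuousAt).continuousWithinAt)
  have key := le_gronwallBound_of_liminf_deriv_right_le (f := f)
    (f' := fun u => C * f u) (δ := f s) (K := C) (ε := 0) (a := s) (b := t)
    hcont ?_ le_rfl (fun x hx => by simp)
  · have := key t (right_mem_Icc.2 hst)
    rwa [gronwallBound_ε0] at this
  · intro x hx r hr
    have hxI : x ∈ Icc s t := Ico_subset_Icc_self hx
    have hslope : Tendsto (slope ψ x) (𝓝[≠] x) (𝓝 (ψ' x)) :=
      (hasDerivAt_iff_tendsto_slope).1 (hd x hxI)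
    have hlt : ‖ψ' x‖ < r := lt_of_le_of_lt (hb x hxI) hr
    have hnorm : Tendsto (fun z => ‖slope ψ x z‖) (𝓝[≠] x) (𝓝 ‖ψ' x‖) :=
      hslope.norm
    have hev : ∀ᶠ z in 𝓝[≠] x, ‖slope ψ x z‖ < r :=
      hnorm.eventually (Filter.Tendsto.eventually_lt_const hlt tendsto_id)
    have hev' : ∀ᶠ z in 𝓝[>] x, ‖slope ψ x z‖ < r :=
      hev.filter_mono (nhdsWithin_mono x fun z hz => ne_of_gt hz)
    refine Frequently.mono ?_ (fun z hz => hz)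
    refine (hev'.and (eventually_mem_nhdsWithin)).mono ?_ |>.frequently
    rintro z ⟨hzr, hzx⟩
    have hzx' : x < z := hzx
    calc (z - x)⁻¹ * (f z - f x) ≤ (z - x)⁻¹ * ‖ψ z - ψ x‖ := by
          apply mul_le_mul_of_nonneg_left _ (inv_nonneg.2 (sub_nonneg.2 hzx'.le))
          have h2 := infDist_le_infDist_add_dist (x := ψ z) (y := ψ x) (s := Sig)
          rw [dist_eq_norm] at h2
          simp only [f]
          linarith
      _ = ‖slope ψ x z‖ := by
          rw [slope_def_module, norm_smul, norm_inv, Real.norm_eq_abs,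
            abs_of_pos (sub_pos.2 hzx')]
      _ < r := hzr

/-- if a continuous vector field `G` on `U × (a,b)` (with `U ⊆ ℝⁿ∖Σ` open)
satisfies `‖G(x,t)‖ ≤ C·d(x,Σ)`, then any integral curve `φ` of `y' = G(y,t)` with
`φ(0) = x₀` satisfies `d(x₀,Σ)·e^{-C|t|} ≤ d(φ(t),Σ) ≤ d(x₀,Σ)·e^{C|t|}`. -/
theorem infDist_integral_curve_bounds {n : ℕ}
    (Sig : Set (EuclideanSpace ℝ (Fin n))) (hSc : IsClosed Sig) (hSne : Sig.Nonempty)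
    (U : Set (EuclideanSpace ℝ (Fin n))) (hU : IsOpen U) (hUS : U ⊆ Sigᶜ)
    (a b : ℝ) (hab : (0 : ℝ) ∈ Ioo a b)
    (G : EuclideanSpace ℝ (Fin n) → ℝ → EuclideanSpace ℝ (Fin n))
    (hGcont : ContinuousOn (fun q : EuclideanSpace ℝ (Fin n) × ℝ => G q.1 q.2) (U ×ˢ Ioo a b))
    (C : ℝ) (hC : 0 < C)
    (hGbound : ∀ x ∈ U, ∀ t ∈ Ioo a b, ‖G x t‖ ≤ C * infDist x Sig)
    (α β : ℝ) (hαβ : Ioo α β ⊆ Ioo a b) (h0 : (0 : ℝ) ∈ Ioo α β)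
    (φ : ℝ → EuclideanSpace ℝ (Fin n))
    (hφU : ∀ t ∈ Ioo α β, φ t ∈ U)
    (hφderiv : ∀ t ∈ Ioo α β, HasDerivAt φ (G (φ t) t) t)
    (x₀ : EuclideanSpace ℝ (Fin n)) (hx₀U : x₀ ∈ U) (hφ0 : φ 0 = x₀) :
    ∀ t ∈ Ioo α β,
      infDist x₀ Sig * Real.exp (-(C * |t|)) ≤ infDist (φ t) Sig ∧
      infDist (φ t) Sig ≤ infDist x₀ Sig * Real.exp (C * |t|) := by
  set f : ℝ → ℝ := fun u => infDist (φ u) Sig with hfdef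
  have hIcc : ∀ s t : ℝ, s ∈ Ioo α β → t ∈ Ioo α β → Icc s t ⊆ Ioo α β := by
    intro s t hs ht w hw
    exact ⟨lt_of_lt_of_le hs.1 hw.1, lt_of_le_of_lt hw.2 ht.2⟩
  have hbnd : ∀ u ∈ Ioo α β, ‖G (φ u) u‖ ≤ C * infDist (φ u) Sig := fun u hu =>
    hGbound (φ u) (hφU u hu) u (hαβ hu)
  have fwd : ∀ s t : ℝ, s ∈ Ioo α β → t ∈ Ioo α β → s ≤ t →
      f t ≤ f s * Real.exp (C * (t - s)) := by
    intro s t hs ht hst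
    exact infDist_grow_key Sig C s t hst φ (fun u => G (φ u) u)
      (fun u hu => hφderiv u (hIcc s t hs ht hu))
      (fun u hu => hbnd u (hIcc s t hs ht hu))
  have bwd : ∀ s t : ℝ, s ∈ Ioo α β → t ∈ Ioo α β → s ≤ t →
      f s ≤ f t * Real.exp (C * (t - s)) := by
    intro s t hs ht hst
    have hmem : ∀ u ∈ Icc s t, s + t - u ∈ Icc s t := by
      intro u hu
      exact ⟨by linarith [hu.2], by linarith [hu.1]⟩
    have key := infDist_grow_key Sig C s t hst (fun u => φ (s + t - u))
      (fun u => (-1 : ℝ) • G (φ (s + t - u)) (s + t - u))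
      (fun u hu => by
        have h1 : HasDerivAt (fun u : ℝ => s + t - u) (-1) u := by
          simpa using (hasDerivAt_id u).const_sub (s + t)
        exact (hφderiv _ (hIcc s t hs ht (hmem u hu))).scomp u h1)
      (fun u hu => by
        rw [norm_smul]
        simpa using hbnd _ (hIcc s t hs ht (hmem u hu)))
    simpa using key
  have hf0 : f 0 = infDist x₀ Sig := by simp [f, hφ0]
  intro t ht
  rcases le_or_gt 0 t with h0t | ht0
  · have habs : |t| = t := abs_of_nonneg h0t
    have hup := fwd 0 t h0 ht h0t
    have hlo := bwd 0 t h0 ht h0t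
    rw [hf0, sub_zero] at hup hlo
    rw [habs]
    have hmul : Real.exp (C * t) * Real.exp (-(C * t)) = 1 := by
      rw [← Real.exp_add]; simp
    refine ⟨?_, hup⟩
    have h3 := mul_le_mul_of_nonneg_right hlo (Real.exp_pos (-(C * t))).le
    rw [mul_assoc, hmul, mul_one] at h3
    exact h3
  · have habs : |t| = -t := abs_of_neg ht0
    have hup := bwd t 0 ht h0 ht0.le
    have hlo := fwd t 0 ht h0 ht0.le
    rw [hf0] at hup hlo
    rw [zero_sub] at hup hlo
    rw [habs]
    have hmul : Real.exp (C * -t) * Real.exp (-(C * -t)) = 1 := by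
      rw [← Real.exp_add]; simp
    constructor
    · have h3 := mul_le_mul_of_nonneg_right hlo (Real.exp_pos (-(C * -t))).le
      rw [mul_assoc, hmul, mul_one] at h3
      exact h3
    · exact hup
end

section
/- Let Σ ⊆ ℝⁿ be a closed set with 0 ∈ Σ, and let f : U → ℝᵖ be a C^k map (k ≥ 1) on a neighborhood U of 0 in ℝⁿ such that for every point a ∈ Σ ∩ U, the k-jet of f at a vanishes, i.e. f(a) = 0 and all iterated derivatives of f of order 1,…,k vanish at a. Then ‖f(x)‖ = o(d(x,Σ)^k) as x → 0: for every ε > 0 there is a neighborhood V ⊆ U of 0 such that ‖f(x)‖ ≤ ε·d(x,Σ)^k for all x ∈ V. -/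
open Metric

/-- if `f` is `C^k` (`k ≥ 1`) on a neighborhood `U` of `0` and the `k`-jet of
`f` vanishes at every point of `Σ ∩ U` (value and all iterated derivatives of order `≤ k`),
then `‖f(x)‖ = o(d(x,Σ)^k)` as `x → 0`. -/
theorem norm_littleO_infDist_pow_of_jet_vanishes {n p : ℕ}
    (Sig : Set (EuclideanSpace ℝ (Fin n))) (hSc : IsClosed Sig) (h0S : (0 : _) ∈ Sig)
    (U : Set (EuclideanSpace ℝ (Fin n))) (hU : IsOpen U) (h0U : (0 : _) ∈ U)
    (f : EuclideanSpace ℝ (Fin n) → EuclideanSpace ℝ (Fin p))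
    (k : ℕ) (hk : 1 ≤ k) (hf : ContDiffOn ℝ k f U)
    (hjet : ∀ a ∈ Sig ∩ U, ∀ m ≤ k, iteratedFDerivWithin ℝ m f U a = 0) :
    ∀ ε > (0 : ℝ), ∃ V, V ⊆ U ∧ V ∈ nhds (0 : EuclideanSpace ℝ (Fin n)) ∧
      ∀ x ∈ V, ‖f x‖ ≤ ε * infDist x Sig ^ k := by

  -- jets vanish also for the global iterated derivative
  have hjet' : ∀ a ∈ Sig ∩ U, ∀ m ≤ k, iteratedFDeriv ℝ m f a = 0 := by
    intro a ha m hm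
    rw [← iteratedFDerivWithin_of_isOpen m hU ha.2]
    exact hjet a ha m hm
  -- differentiability of iterated derivatives on U
  have hdiff : ∀ m < k, ∀ y ∈ U, DifferentiableAt ℝ (iteratedFDeriv ℝ m f) y := by
    intro m hm y hy
    have h1 : DifferentiableWithinAt ℝ (iteratedFDerivWithin ℝ m f U) U y :=
      hf.differentiableOn_iteratedFDerivWithin (by exact_mod_cast hm) hU.uniqueDiffOn y hy
    have h2 : DifferentiableAt ℝ (iteratedFDerivWithin ℝ m f U) y :=
      h1.differentiableAt (hU.mem_nhds hy)
    have h3 : iteratedFDerivWithin ℝ m f U =ᶠ[nhds y] iteratedFDeriv ℝ m f :=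
      Filter.eventuallyEq_of_mem (hU.mem_nhds hy) (iteratedFDerivWithin_of_isOpen m hU)
    exact (Filter.EventuallyEq.differentiableAt_iff h3).mp h2
  -- main claim by induction
  have claim : ∀ j ≤ k, ∀ ε > (0 : ℝ), ∃ δ > (0 : ℝ), ball (0 : EuclideanSpace ℝ (Fin n)) δ ⊆ U ∧
      ∀ x ∈ ball (0 : EuclideanSpace ℝ (Fin n)) δ, ‖iteratedFDeriv ℝ (k - j) f x‖ ≤ ε * infDist x Sig ^ j := by
    intro j
    induction j with
    | zero =>
      intro _ ε hε
      -- continuity of the k-th derivative at 0, where it vanishes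
      have hc0 : ContinuousAt (iteratedFDeriv ℝ k f) 0 := by
        have h1 : ContinuousWithinAt (iteratedFDerivWithin ℝ k f U) U 0 :=
          hf.continuousOn_iteratedFDerivWithin le_rfl hU.uniqueDiffOn 0 h0U
        have h2 : ContinuousAt (iteratedFDerivWithin ℝ k f U) 0 :=
          h1.continuousAt (hU.mem_nhds h0U)
        have h3 : iteratedFDerivWithin ℝ k f U =ᶠ[nhds 0] iteratedFDeriv ℝ k f :=
          Filter.eventuallyEq_of_mem (hU.mem_nhds h0U) (iteratedFDerivWithin_of_isOpen k hU)
        exact h2.congr h3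
      have hval : iteratedFDeriv ℝ k f 0 = 0 := hjet' 0 ⟨h0S, h0U⟩ k le_rfl
      have hev : ∀ᶠ x in nhds (0 : EuclideanSpace ℝ (Fin n)), ‖iteratedFDeriv ℝ k f x‖ ≤ ε := by
        have := hc0.eventually (eventually_nhds_norm_smul_sub_lt (1 : ℝ)
          (iteratedFDeriv ℝ k f 0) hε)
        filter_upwards [this] with x hx
        simpa [hval, one_smul] using hx.le
      rcases Metric.eventually_nhds_iff_ball.mp (hev.and (hU.eventually_mem h0U)) with
        ⟨δ, hδ, hball⟩
      refine ⟨δ, hδ, fun y hy => (hball y hy).2, fun x hx => ?_⟩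
      simpa using (hball x hx).1
    | succ j ih =>
      intro hjk ε hε
      obtain ⟨δ₀, hδ₀, hballU, hbound⟩ := ih (le_of_lt (Nat.lt_of_succ_le hjk)) ε hε
      refine ⟨δ₀ / 3, by linarith, fun y hy => hballU (by
        simp only [mem_ball, dist_zero_right] at hy ⊢; linarith), ?_⟩
      intro x hx
      simp only [mem_ball, dist_zero_right] at hx
      -- nearest point of Sig
      obtain ⟨a, haS, hax⟩ := hSc.exists_infDist_eq_dist ⟨0, h0S⟩ x
      have hdxa : dist x a = infDist x Sig := hax.symm
      have hdle : infDist x Sig ≤ ‖x‖ := by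
        simpa using infDist_le_dist_of_mem h0S
      have haball : a ∈ ball (0 : EuclideanSpace ℝ (Fin n)) δ₀ := by
        have : ‖a‖ ≤ ‖x‖ + dist x a := by
          have := dist_triangle a x 0
          simp only [dist_zero_right] at this ⊢
          rw [dist_comm] at this
          linarith
        rw [mem_ball, dist_zero_right]
        rw [hdxa] at this
        linarith
      have hxball : x ∈ ball (0 : EuclideanSpace ℝ (Fin n)) δ₀ := by
        rw [mem_ball, dist_zero_right]; linarith
      have haU : a ∈ U := hballU haball
      have hseg : segment ℝ a x ⊆ ball (0 : EuclideanSpace ℝ (Fin n)) δ₀ :=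
        (convex_ball _ _).segment_subset haball hxball
      set m := k - (j + 1) with hm
      have hmk : m < k := Nat.sub_lt (lt_of_lt_of_le Nat.one_pos hk) (Nat.succ_pos j)
      have hm1 : m + 1 = k - j := by omega
      -- the value at the nearest point vanishes
      have hga : iteratedFDeriv ℝ m f a = 0 := hjet' a ⟨haS, haU⟩ m hmk.le
      -- mean value inequality along the segment
      have hmvt : ‖iteratedFDeriv ℝ m f x - iteratedFDeriv ℝ m f a‖ ≤
          (ε * infDist x Sig ^ j) * ‖x - a‖ := by
        apply (convex_segment a x).norm_image_sub_le_of_norm_fderiv_le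
          (fun y hy => hdiff m hmk _ (hballU (hseg hy)))
          (fun y hy => ?_) (left_mem_segment ℝ a x) (right_mem_segment ℝ a x)
        rw [norm_fderiv_iteratedFDeriv, hm1]
        have h1 : ‖iteratedFDeriv ℝ (k - j) f y‖ ≤ ε * infDist y Sig ^ j :=
          hbound y (hseg hy)
        have h2 : infDist y Sig ≤ infDist x Sig := by
          calc infDist y Sig ≤ dist y a := infDist_le_dist_of_mem haS
            _ ≤ dist x a := by
                obtain ⟨t, ht, rfl⟩ := (segment_eq_image' ℝ a x) ▸ hy
                simp only [dist_eq_norm, add_sub_cancel_left, norm_smul,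
                  Real.norm_eq_abs, abs_of_nonneg ht.1]
                exact mul_le_of_le_one_left (norm_nonneg _) ht.2
            _ = infDist x Sig := hdxa
        calc ‖iteratedFDeriv ℝ (k - j) f y‖ ≤ ε * infDist y Sig ^ j := h1
          _ ≤ ε * infDist x Sig ^ j :=
            mul_le_mul_of_nonneg_left (pow_le_pow_left₀ infDist_nonneg h2 j) hε.le
      rw [hga, sub_zero] at hmvt
      calc ‖iteratedFDeriv ℝ m f x‖ ≤ (ε * infDist x Sig ^ j) * ‖x - a‖ := hmvt
        _ = ε * (infDist x Sig ^ j * infDist x Sig) := by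
            rw [← hdxa, dist_eq_norm]; ring
        _ = ε * infDist x Sig ^ (j + 1) := by rw [pow_succ]
  intro ε hε
  obtain ⟨δ, hδ, hballU, hbound⟩ := claim k le_rfl ε hε
  refine ⟨ball (0 : EuclideanSpace ℝ (Fin n)) δ, hballU, ball_mem_nhds _ hδ, fun x hx => ?_⟩
  have := hbound x hx
  rwa [Nat.sub_self, norm_iteratedFDeriv_zero] at this
end

section
/- Let Σ ⊆ ℝⁿ be a closed set with 0 ∈ Σ. Let f : (ℝⁿ×ℝˡ,0) → (ℝᵖ,0) be a C² map satisfying the relative Kuo condition (K_{Σ,ω}^{r,δ}) with constants C, α, w̄ > 0, and let p : (ℝⁿ×ℝˡ,0) → (ℝᵖ,0) be a C¹ map with |∂p_i/∂x_j(u)| = o(d_ω(x,Σ)^r) for all 1 ≤ i ≤ p, 1 ≤ j ≤ n. For t ∈ [0,1] define F(u,t) = f(u) + t·p(u). Then there exist C′ > 0 and a neighborhood V ⊆ {u : ‖u‖ < α} of 0 such that for every t ∈ [0,1] and every u = (x,λ) ∈ V with x ∉ Σ and ‖f(u)‖ ≤ w̄·d_ω(x,Σ)^r, the Kuo pseudo-distance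 of F(·,t) satisfies d_{ω,x}∇F(·,t)(u) ≥ C′·d_ω(x,Σ)^{r−δ}. -/
noncomputable section

/-- The weighted quasi-norm on `ℝ^ι` with weights `ω`: `ρ_ω(u) = (Σ_i |u_i|^{2q_i})^{1/(2q)}`
with `q = ∏ ω_j`, `q_i = q/ω_i`. -/
def rhoW {ι : Type*} [Fintype ι] (ω : ι → ℝ) (u : ι → ℝ) : ℝ :=
  (∑ i, |u i| ^ (2 * (∏ j, ω j) / ω i)) ^ (1 / (2 * ∏ j, ω j))

/-- The weighted distance `d_ω(x,Σ) = inf_{y∈Σ} ρ_ω(x-y)` (formed with the first `n`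
weights). -/
def dW {n : ℕ} (ω : Fin n → ℝ) (x : EuclideanSpace ℝ (Fin n))
    (Sig : Set (EuclideanSpace ℝ (Fin n))) : ℝ :=
  ⨅ y : Sig, rhoW ω (fun i => x i - (y : EuclideanSpace ℝ (Fin n)) i)

/-- `ρ_ω` of a point `u = (x,λ) ∈ ℝⁿ×ℝˡ`, using all `n+l` weights. -/
def rhoU {n l : ℕ} (ω : Fin n ⊕ Fin l → ℝ)
    (u : EuclideanSpace ℝ (Fin n) × EuclideanSpace ℝ (Fin l)) : ℝ :=
  rhoW ω (Sum.elim (fun i => u.1 i) (fun i => u.2 i))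

/-- The weighted gradient of the `i`-th component of `f` in the `x`-variables:
`(∇_{ω,x}f_i(u))_j = ρ_ω(u)^{ω_j}·∂f_i/∂x_j(u)`. -/
def gradXW {n l p : ℕ} (ω : Fin n ⊕ Fin l → ℝ)
    (f : EuclideanSpace ℝ (Fin n) × EuclideanSpace ℝ (Fin l) → EuclideanSpace ℝ (Fin p))
    (i : Fin p) (u : EuclideanSpace ℝ (Fin n) × EuclideanSpace ℝ (Fin l)) :
    EuclideanSpace ℝ (Fin n) :=
  WithLp.toLp 2 (fun j => rhoU ω u ^ ω (Sum.inl j) * fderiv ℝ f u (EuclideanSpace.single j 1, 0) i)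

/-- `N(f,j,u)`: the weighted gradient `∇_{ω,x}f_j(u)` minus its orthogonal projection onto
the span of the other weighted gradients. -/
def NKW {n l p : ℕ} (ω : Fin n ⊕ Fin l → ℝ)
    (f : EuclideanSpace ℝ (Fin n) × EuclideanSpace ℝ (Fin l) → EuclideanSpace ℝ (Fin p))
    (j : Fin p) (u : EuclideanSpace ℝ (Fin n) × EuclideanSpace ℝ (Fin l)) :
    EuclideanSpace ℝ (Fin n) :=
  gradXW ω f j u - (Submodule.orthogonalProjectionOnto
    (Submodule.span ℝ ((fun i => gradXW ω f i u) '' {i | i ≠ j})) (gradXW ω f j u) :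
      EuclideanSpace ℝ (Fin n))

/-- The weighted Kuo pseudo-distance `d_{ω,x}∇f(u) = min_j ‖N(f,j,u)‖`. -/
def kuoDistW {n l p : ℕ} (ω : Fin n ⊕ Fin l → ℝ)
    (f : EuclideanSpace ℝ (Fin n) × EuclideanSpace ℝ (Fin l) → EuclideanSpace ℝ (Fin p))
    (u : EuclideanSpace ℝ (Fin n) × EuclideanSpace ℝ (Fin l)) : ℝ :=
  ⨅ j : Fin p, ‖NKW ω f j u‖

/-!
Adding `t • P` changes each weighted gradient `∇_{ω,x}F_i(u)` by `t • ∇_{ω,x}P_i(u)`. Near `0`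
we have `ρ_ω(u) ≤ 1` and, as `0 ∈ Σ`, `d = d_ω(x,Σ) ≤ 1`; so this change is at most
`ε √n d^r ≤ ε √n d^{r-δ}`, a small fraction of `d_{ω,x}∇f(u) ≥ C d^{r-δ}` once `ε` is small.
Distances from the members of a finite family of `p` vectors to the spans of the others are
stable: if they are all at least `D` and every vector moves by at most `η` with `4 p η ≤ D`,
they stay at least `D / 2`. Hence `C' = C / 2` works.
-/

open Topology

section SpanSeparated

variable {ι E : Type*} [Fintype ι] [NormedAddCommGroup E] [NormedSpace ℝ E]

def SpanSeparated (d : ℝ) (s : ι → E) : Prop :=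
  ∀ k, ∀ v ∈ Submodule.span ℝ (s '' {i | i ≠ k}), d ≤ ‖s k - v‖

lemma exists_sum_eq_of_mem_span_image_ne {s : ι → E} {j : ι} {v : E}
    (hv : v ∈ Submodule.span ℝ (s '' {i | i ≠ j})) :
    ∃ c : ι → ℝ, c j = 0 ∧ ∑ i, c i • s i = v := by
  classical
  obtain ⟨c, hc, rfl⟩ := (Finsupp.mem_span_image_iff_linearCombination ℝ).1 hv
  refine ⟨c, Finsupp.notMem_support_iff.1 fun hj => hc hj rfl, ?_⟩
  rw [Finsupp.linearCombination_apply, Finsupp.sum_fintype _ _ fun i => zero_smul ℝ (s i)]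

lemma SpanSeparated.abs_mul_le {d : ℝ} {s : ι → E} (hs : SpanSeparated d s) {c : ι → ℝ}
    {j : ι} (hcj : c j = 0) (k : ι) : |c k| * d ≤ ‖s j - ∑ i, c i • s i‖ := by
  classical
  by_cases hck : c k = 0
  · simp [hck]
  have hkj : j ≠ k := by rintro rfl; exact hck hcj
  set w := (c k)⁻¹ • (s j - ∑ i ∈ Finset.univ.erase k, c i • s i)
  have hw : w ∈ Submodule.span ℝ (s '' {i | i ≠ k}) := by
    refine Submodule.smul_mem _ _ (Submodule.sub_mem _ (Submodule.subset_span ⟨j, hkj, rfl⟩) ?_)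
    exact Submodule.sum_mem _ fun i hi =>
      Submodule.smul_mem _ _ (Submodule.subset_span ⟨i, Finset.ne_of_mem_erase hi, rfl⟩)
  have hrepr : s j - ∑ i, c i • s i = (-c k) • (s k - w) := by
    rw [← Finset.add_sum_erase _ _ (Finset.mem_univ k), smul_sub, smul_smul, neg_mul,
      mul_inv_cancel₀ hck]
    simp only [neg_smul, one_smul]
    abel
  calc |c k| * d ≤ |c k| * ‖s k - w‖ := mul_le_mul_of_nonneg_left (hs k w hw) (abs_nonneg _)
    _ = ‖s j - ∑ i, c i • s i‖ := by rw [hrepr, norm_smul, Real.norm_eq_abs, abs_neg]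

lemma SpanSeparated.of_norm_sub_le {d η : ℝ} {s g : ι → E} (hs : SpanSeparated d s)
    (hgs : ∀ i, ‖g i - s i‖ ≤ η) (hη : 4 * Fintype.card ι * η ≤ d) :
    SpanSeparated (d / 2) g := by
  intro j v hv
  obtain ⟨c, hcj, rfl⟩ := exists_sum_eq_of_mem_span_image_ne hv
  set M := ‖s j - ∑ i, c i • s i‖
  have hdM : d ≤ M := hs j _ <| Submodule.sum_mem _ fun i _ => by
    by_cases hij : i = j
    · simp [hij, hcj]
    · exact Submodule.smul_mem _ _ (Submodule.subset_span ⟨i, hij, rfl⟩)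
  have hη0 : 0 ≤ η := (norm_nonneg _).trans (hgs j)
  have hcard : (1 : ℝ) ≤ Fintype.card ι := Nat.one_le_cast.2 (Fintype.card_pos_iff.2 ⟨j⟩)
  have hsum : ‖∑ i, c i • (g i - s i)‖ ≤ M / 4 := by
    have hterm : ∀ i, 4 * Fintype.card ι * (|c i| * η) ≤ M := fun i =>
      calc 4 * Fintype.card ι * (|c i| * η) = |c i| * (4 * Fintype.card ι * η) := by ring
        _ ≤ |c i| * d := mul_le_mul_of_nonneg_left hη (abs_nonneg _)
        _ ≤ M := hs.abs_mul_le hcj i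
    calc ‖∑ i, c i • (g i - s i)‖ ≤ ∑ i, |c i| * η := by
          refine (norm_sum_le _ _).trans (Finset.sum_le_sum fun i _ => ?_)
          rw [norm_smul, Real.norm_eq_abs]
          exact mul_le_mul_of_nonneg_left (hgs i) (abs_nonneg _)
      _ ≤ ∑ _i : ι, M / (4 * Fintype.card ι) := Finset.sum_le_sum fun i _ => by
          rw [le_div_iff₀' (by positivity)]; exact hterm i
      _ = M / 4 := by
          rw [Finset.sum_const, Finset.card_univ, nsmul_eq_mul]; field_simp
  have hsplit : g j - ∑ i, c i • g i =
      (s j - ∑ i, c i • s i) + ((g j - s j) - ∑ i, c i • (g i - s i)) := by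
    simp only [smul_sub, Finset.sum_sub_distrib]; abel
  have := norm_sub_norm_le (s j - ∑ i, c i • s i) (-((g j - s j) - ∑ i, c i • (g i - s i)))
  rw [sub_neg_eq_add, ← hsplit, norm_neg] at this
  have hgj := (norm_sub_le (g j - s j) (∑ i, c i • (g i - s i))).trans (add_le_add (hgs j) hsum)
  have h4η : 4 * η ≤ d := by nlinarith
  linarith

end SpanSeparated

lemma EuclideanSpace.norm_le_sqrt_card_mul {ι : Type*} [Fintype ι] (x : EuclideanSpace ℝ ι)
    {a : ℝ} (ha : 0 ≤ a) (hx : ∀ j, |x j| ≤ a) : ‖x‖ ≤ √(Fintype.card ι) * a := by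
  rw [EuclideanSpace.norm_eq, ← Real.sqrt_sq ha, ← Real.sqrt_mul (Nat.cast_nonneg _)]
  refine Real.sqrt_le_sqrt ?_
  calc ∑ j, ‖x j‖ ^ 2 ≤ ∑ _j : ι, a ^ 2 :=
        Finset.sum_le_sum fun j _ => pow_le_pow_left₀ (norm_nonneg _) (hx j) 2
    _ = Fintype.card ι * a ^ 2 := by simp

section Weighted

variable {ι : Type*} [Fintype ι] {ω : ι → ℝ}

lemma rhoW_nonneg (v : ι → ℝ) : 0 ≤ rhoW ω v :=
  Real.rpow_nonneg (Finset.sum_nonneg fun _ _ => Real.rpow_nonneg (abs_nonneg _) _) _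

lemma rhoW_zero (hω : ∀ i, 0 < ω i) : rhoW ω 0 = 0 := by
  have hq : 0 < ∏ j, ω j := Finset.prod_pos fun i _ => hω i
  have hterm : ∀ i, |(0 : ι → ℝ) i| ^ (2 * (∏ j, ω j) / ω i) = 0 := fun i => by
    have := hω i
    simp only [Pi.zero_apply, abs_zero]
    exact Real.zero_rpow (by positivity)
  simp only [rhoW, hterm, Finset.sum_const_zero]
  exact Real.zero_rpow (by positivity)

lemma continuous_rhoW (hω : ∀ i, 0 < ω i) : Continuous (rhoW ω) := by
  have hq : 0 < ∏ j, ω j := Finset.prod_pos fun i _ => hω i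
  refine (Real.continuous_rpow_const (by positivity)).comp
    (continuous_finsetSum _ fun i _ => ?_)
  have := hω i
  exact (Real.continuous_rpow_const (by positivity)).comp
    (continuous_abs.comp (continuous_apply i))

lemma eventually_rhoW_lt_one {X : Type*} [TopologicalSpace X] {φ : X → ι → ℝ} {x₀ : X}
    (hω : ∀ i, 0 < ω i) (hφ : ContinuousAt φ x₀) (hφ₀ : φ x₀ = 0) :
    ∀ᶠ x in 𝓝 x₀, rhoW ω (φ x) < 1 :=
  ((continuous_rhoW hω).continuousAt.comp hφ).eventually
    (gt_mem_nhds (by simp [hφ₀, rhoW_zero hω]))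

end Weighted

lemma dW_nonneg {n : ℕ} (ω : Fin n → ℝ) (x : EuclideanSpace ℝ (Fin n))
    (Sig : Set (EuclideanSpace ℝ (Fin n))) : 0 ≤ dW ω x Sig :=
  Real.iInf_nonneg fun _ => rhoW_nonneg _

lemma dW_le_rhoW_of_zero_mem {n : ℕ} (ω : Fin n → ℝ) (x : EuclideanSpace ℝ (Fin n))
    {Sig : Set (EuclideanSpace ℝ (Fin n))} (h0 : 0 ∈ Sig) : dW ω x Sig ≤ rhoW ω (fun i => x i) :=
  (ciInf_le ⟨0, by rintro _ ⟨y, rfl⟩; exact rhoW_nonneg _⟩ ⟨0, h0⟩).trans_eq (by simp)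

lemma eventually_rhoU_lt_one {n l : ℕ} {ω : Fin n ⊕ Fin l → ℝ} (hω : ∀ i, 0 < ω i) :
    ∀ᶠ u : EuclideanSpace ℝ (Fin n) × EuclideanSpace ℝ (Fin l) in 𝓝 0, rhoU ω u < 1 := by
  refine eventually_rhoW_lt_one hω (continuous_pi ?_).continuousAt (by ext (i | i) <;> rfl)
  rintro (i | i) <;> simp only [Sum.elim_inl, Sum.elim_inr] <;> fun_prop

lemma norm_gradXW_le {n l p : ℕ} {ω : Fin n ⊕ Fin l → ℝ} (hω : ∀ i, 0 ≤ ω i)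
    {P : EuclideanSpace ℝ (Fin n) × EuclideanSpace ℝ (Fin l) → EuclideanSpace ℝ (Fin p)}
    {u : EuclideanSpace ℝ (Fin n) × EuclideanSpace ℝ (Fin l)} (hu : rhoU ω u ≤ 1) (i : Fin p)
    {a : ℝ} (ha : 0 ≤ a) (hP : ∀ j, |fderiv ℝ P u (EuclideanSpace.single j 1, 0) i| ≤ a) :
    ‖gradXW ω P i u‖ ≤ √n * a := by
  have hρ : 0 ≤ rhoU ω u := rhoW_nonneg _
  simpa using EuclideanSpace.norm_le_sqrt_card_mul (gradXW ω P i u) ha fun j => by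
    rw [gradXW, PiLp.toLp_apply, abs_mul, abs_of_nonneg (Real.rpow_nonneg hρ _)]
    exact (mul_le_of_le_one_left (abs_nonneg _) (Real.rpow_le_one hρ hu (hω _))).trans (hP j)

section Kuo

variable {n l p : ℕ} (ω : Fin n ⊕ Fin l → ℝ)
  (f : EuclideanSpace ℝ (Fin n) × EuclideanSpace ℝ (Fin l) → EuclideanSpace ℝ (Fin p))
  (u : EuclideanSpace ℝ (Fin n) × EuclideanSpace ℝ (Fin l))

lemma norm_NKW_le (k : Fin p) {v : EuclideanSpace ℝ (Fin n)}
    (hv : v ∈ Submodule.span ℝ ((fun i => gradXW ω f i u) '' {i | i ≠ k})) :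
    ‖NKW ω f k u‖ ≤ ‖gradXW ω f k u - v‖ := by
  rw [NKW, ← Submodule.starProjection_apply, Submodule.starProjection_minimal]
  exact ciInf_le ⟨0, by rintro x ⟨y, rfl⟩; exact norm_nonneg _⟩
    (⟨v, hv⟩ : Submodule.span ℝ ((fun i => gradXW ω f i u) '' {i | i ≠ k}))

lemma spanSeparated_kuoDistW : SpanSeparated (kuoDistW ω f u) (fun i => gradXW ω f i u) :=
  fun k _ hv => (ciInf_le ⟨0, by rintro x ⟨j, rfl⟩; exact norm_nonneg _⟩ k).trans
    (norm_NKW_le ω f u k hv)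

lemma SpanSeparated.le_kuoDistW [Nonempty (Fin p)] {d : ℝ}
    (hd : SpanSeparated d (fun i => gradXW ω f i u)) : d ≤ kuoDistW ω f u :=
  le_ciInf fun j => hd j _ (Submodule.coe_mem _)

lemma half_kuoDistW_le_of_norm_gradXW_sub_le
    (g : EuclideanSpace ℝ (Fin n) × EuclideanSpace ℝ (Fin l) → EuclideanSpace ℝ (Fin p))
    {η : ℝ} (hgf : ∀ i, ‖gradXW ω g i u - gradXW ω f i u‖ ≤ η)
    (hη : 4 * p * η ≤ kuoDistW ω f u) :
    kuoDistW ω f u / 2 ≤ kuoDistW ω g u := by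
  rcases isEmpty_or_nonempty (Fin p) with hp | hp
  · simp [kuoDistW]
  refine SpanSeparated.le_kuoDistW ω g u ((spanSeparated_kuoDistW ω f u).of_norm_sub_le hgf ?_)
  simpa using hη

lemma gradXW_add_smul {P : EuclideanSpace ℝ (Fin n) × EuclideanSpace ℝ (Fin l) →
      EuclideanSpace ℝ (Fin p)}
    (hf : DifferentiableAt ℝ f u) (hP : DifferentiableAt ℝ P u) (t : ℝ) (i : Fin p) :
    gradXW ω (fun v => f v + t • P v) i u = gradXW ω f i u + t • gradXW ω P i u := by
  have hF : fderiv ℝ (fun v => f v + t • P v) u = fderiv ℝ f u + t • fderiv ℝ P u := by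
    rw [fderiv_fun_add (g := fun v => t • P v) hf (hP.const_smul t), fderiv_fun_const_smul hP t]
  ext j
  simp only [gradXW, hF, add_apply, smul_apply, PiLp.add_apply, PiLp.smul_apply, smul_eq_mul,
    PiLp.toLp_apply]
  ring

end Kuo

theorem kuoDistW_perturbation_bound_general {n l p : ℕ}
    (ω : Fin n ⊕ Fin l → ℝ) (hω : ∀ i, 0 < ω i)
    (Sig : Set (EuclideanSpace ℝ (Fin n))) (h0S : (0 : _) ∈ Sig)
    (f : EuclideanSpace ℝ (Fin n) × EuclideanSpace ℝ (Fin l) → EuclideanSpace ℝ (Fin p))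
    (hf : ContDiff ℝ 2 f)
    (r δ C α w : ℝ) (hr : 0 < r) (hδ : 0 < δ) (hC : 0 < C) (hα : 0 < α)
    (hKuo : ∀ u : EuclideanSpace ℝ (Fin n) × EuclideanSpace ℝ (Fin l), ‖u‖ < α →
      ‖f u‖ ≤ w * dW (fun i => ω (Sum.inl i)) u.1 Sig ^ r →
      C * dW (fun i => ω (Sum.inl i)) u.1 Sig ^ (r - δ) ≤ kuoDistW ω f u)
    (P : EuclideanSpace ℝ (Fin n) × EuclideanSpace ℝ (Fin l) → EuclideanSpace ℝ (Fin p))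
    (hP : ContDiff ℝ 1 P)
    (hPd : ∀ ε > (0 : ℝ),
      ∃ U ∈ nhds (0 : EuclideanSpace ℝ (Fin n) × EuclideanSpace ℝ (Fin l)), ∀ u ∈ U,
        ∀ i j, |fderiv ℝ P u (EuclideanSpace.single j 1, 0) i| ≤
          ε * dW (fun i => ω (Sum.inl i)) u.1 Sig ^ r) :
    ∃ C' > (0 : ℝ),
      ∃ V ∈ nhds (0 : EuclideanSpace ℝ (Fin n) × EuclideanSpace ℝ (Fin l)),
        V ⊆ {u | ‖u‖ < α} ∧
        ∀ t ∈ Set.Icc (0 : ℝ) 1,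
          ∀ u ∈ V, u.1 ∉ Sig → ‖f u‖ ≤ w * dW (fun i => ω (Sum.inl i)) u.1 Sig ^ r →
            C' * dW (fun i => ω (Sum.inl i)) u.1 Sig ^ (r - δ) ≤
              kuoDistW ω (fun v => f v + t • P v) u := by
  obtain ⟨K, hK0, hK⟩ : ∃ K : ℝ, 0 < K ∧ 4 * p * √n ≤ K :=
    ⟨4 * (p + 1) * (√n + 1), by positivity, by gcongr <;> linarith⟩
  obtain ⟨U, hU, hPU⟩ := hPd (C / K) (by positivity)
  have hnear : ∀ᶠ u : EuclideanSpace ℝ (Fin n) × EuclideanSpace ℝ (Fin l) in 𝓝 0,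
      ‖u‖ < α ∧ rhoU ω u < 1 ∧ rhoW (fun i => ω (Sum.inl i)) (fun i => u.1 i) < 1 ∧ u ∈ U := by
    filter_upwards [Metric.ball_mem_nhds 0 hα,
      eventually_rhoU_lt_one hω,
      eventually_rhoW_lt_one (φ := fun u => fun i => u.1 i) (fun i => hω (Sum.inl i))
        (by fun_prop) (by ext i; rfl), hU]
      with u hα' hρ hρx hu
    exact ⟨mem_ball_zero_iff.1 hα', hρ, hρx, hu⟩
  refine ⟨C / 2, by positivity, _, hnear, fun u hu => hu.1, ?_⟩
  rintro t ⟨ht0, ht1⟩ u ⟨hα', hρ, hρx, hu⟩ - hfu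
  have hKf := hKuo u hα' hfu
  set d := dW (fun i => ω (Sum.inl i)) u.1 Sig
  have hdr0 : 0 ≤ d ^ r := Real.rpow_nonneg (dW_nonneg _ _ _) r
  have hdr : d ^ r ≤ d ^ (r - δ) :=
    Real.rpow_le_rpow_of_exponent_ge_of_imp (dW_nonneg _ _ _)
      ((dW_le_rhoW_of_zero_mem _ _ h0S).trans hρx.le) (by linarith) fun _ h => absurd h hr.ne'
  have hgrad : ∀ i, ‖gradXW ω (fun v => f v + t • P v) i u - gradXW ω f i u‖ ≤
      √n * (C / K * d ^ r) := fun i => by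
    rw [gradXW_add_smul ω f u (hf.differentiable two_ne_zero u) (hP.differentiable one_ne_zero u),
      add_sub_cancel_left, norm_smul, Real.norm_eq_abs, abs_of_nonneg ht0]
    exact (mul_le_of_le_one_left (norm_nonneg _) ht1).trans
      (norm_gradXW_le (fun i => (hω i).le) hρ.le i (by positivity) (hPU u hu i))
  have hη : 4 * p * (√n * (C / K * d ^ r)) ≤ kuoDistW ω f u :=
    calc 4 * p * (√n * (C / K * d ^ r)) = 4 * p * √n / K * C * d ^ r := by ring
      _ ≤ 1 * C * d ^ (r - δ) := by
          gcongr
          exact (div_le_one hK0).2 hK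
      _ ≤ kuoDistW ω f u := by linarith
  linarith [half_kuoDistW_le_of_norm_gradXW_sub_le ω f u _ hgrad hη]

/-- Lemma 3.2: if `f` is `C²` and satisfies the relative Kuo condition
`(K_{Σ,ω}^{r,δ})` with constants `C, α, w̄`, and `p` is `C¹` with
`|∂p_i/∂x_j| = o(d_ω(x,Σ)^r)`, then setting `F(u,t) = f(u) + t·p(u)` there are `C′ > 0`
and a neighborhood `V ⊆ {‖u‖ < α}` of `0` such that for all `t ∈ [0,1]` and all
`u = (x,λ) ∈ V` with `x ∉ Σ` and `‖f(u)‖ ≤ w̄·d_ω(x,Σ)^r`, one has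
`d_{ω,x}∇F(·,t)(u) ≥ C′·d_ω(x,Σ)^{r-δ}`. -/
theorem kuoDistW_perturbation_bound {n l p : ℕ}
    (ω : Fin n ⊕ Fin l → ℝ) (hω : ∀ i, 0 < ω i)
    (Sig : Set (EuclideanSpace ℝ (Fin n))) (hSc : IsClosed Sig) (h0S : (0 : _) ∈ Sig)
    (f : EuclideanSpace ℝ (Fin n) × EuclideanSpace ℝ (Fin l) → EuclideanSpace ℝ (Fin p))
    (hf : ContDiff ℝ 2 f) (hf0 : f 0 = 0)
    (r δ C α w : ℝ) (hr : 0 < r) (hδ : 0 < δ) (hC : 0 < C) (hα : 0 < α) (hw : 0 < w)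
    (hKuo : ∀ u : EuclideanSpace ℝ (Fin n) × EuclideanSpace ℝ (Fin l), ‖u‖ < α →
      ‖f u‖ ≤ w * dW (fun i => ω (Sum.inl i)) u.1 Sig ^ r →
      C * dW (fun i => ω (Sum.inl i)) u.1 Sig ^ (r - δ) ≤ kuoDistW ω f u)
    (P : EuclideanSpace ℝ (Fin n) × EuclideanSpace ℝ (Fin l) → EuclideanSpace ℝ (Fin p))
    (hP : ContDiff ℝ 1 P) (hP0 : P 0 = 0)
    (hPd : ∀ ε > (0 : ℝ),
      ∃ U ∈ nhds (0 : EuclideanSpace ℝ (Fin n) × EuclideanSpace ℝ (Fin l)), ∀ u ∈ U,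
        ∀ i j, |fderiv ℝ P u (EuclideanSpace.single j 1, 0) i| ≤
          ε * dW (fun i => ω (Sum.inl i)) u.1 Sig ^ r) :
    ∃ C' > (0 : ℝ),
      ∃ V ∈ nhds (0 : EuclideanSpace ℝ (Fin n) × EuclideanSpace ℝ (Fin l)),
        V ⊆ {u | ‖u‖ < α} ∧
        ∀ t ∈ Set.Icc (0 : ℝ) 1,
          ∀ u ∈ V, u.1 ∉ Sig → ‖f u‖ ≤ w * dW (fun i => ω (Sum.inl i)) u.1 Sig ^ r →
            C' * dW (fun i => ω (Sum.inl i)) u.1 Sig ^ (r - δ) ≤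
              kuoDistW ω (fun v => f v + t • P v) u :=
  kuoDistW_perturbation_bound_general ω hω Sig h0S f hf r δ C α w hr hδ hC hα hKuo P hP hPd

end
end
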